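/- Under the substitution Z = −b(1+b̃b)^{−1/2}, Z̃ = −b̃(1+b b̃)^{−1/2}, the pullback of the 2-form Tr((1−Z Z̃)^{−1} dZ ∧ (1−Z̃Z)^{−1} dZ̃) equals the flat 2-form Tr(db ∧ db̃). -/

import Mathlib

/-!
Let `A = (1 + b̃b)^{1/2}` and `A' = (1 + bb̃)^{1/2}` (`b̃` is `c` below). Since `A'` and `-A`
have disjoint spectra, Sylvester's theorem turns `A'(A'b - bA) = (A'b - bA)(-A)` into `bA = A'b`,
and likewise `b̃A' = Ab̃`; hence `(1 - ZZ̃)⁻¹ = A'²` and `(1 - Z̃Z)⁻¹ = A²`. Differentiating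
`bA = A'b` and `A'² = 1 + bb̃` along tangent vectors `u`, with `σ_u = dA'(u)`, the integrand at
`(v, w)` becomes `Tr(v₁w₂) - Tr(σ_v σ_w) - Tr(L_v L_w)` where `L_u = u₁b̃ - σ_u A' = A'σ_u - b u₂`.
The last two terms are symmetric in `(v, w)`, so only the flat term survives the antisymmetrization.
-/

open Matrix Filter Polynomial

attribute [local instance] Matrix.normedAddCommGroup Matrix.normedSpace

namespace Matrix

section Sylvester

variable {m n : Type*} [Fintype m] [DecidableEq m] [Fintype n] [DecidableEq n]

theorem aeval_mul_eq_mul_aeval {R : Type*} [CommRing R] {M : Matrix m m R} {N : Matrix n n R}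
    {X : Matrix m n R} (h : M * X = X * N) (P : R[X]) :
    aeval M P * X = X * aeval N P := by
  induction P using Polynomial.induction_on' with
  | add P Q hP hQ => rw [map_add, map_add, Matrix.add_mul, Matrix.mul_add, hP, hQ]
  | monomial k a =>
    have hpow : M ^ k * X = X * N ^ k := by
      induction k with
      | zero => simp
      | succ k ih => rw [pow_succ, pow_succ, Matrix.mul_assoc, h, ← Matrix.mul_assoc, ih,
          Matrix.mul_assoc]
    simp only [aeval_monomial, Algebra.algebraMap_eq_smul_one, Matrix.smul_mul, Matrix.one_mul,
      Matrix.mul_smul, hpow]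

theorem eq_zero_of_mul_eq_mul_of_disjoint_spectrum {K : Type*} [Field K] [IsAlgClosed K]
    {M : Matrix m m K} {N : Matrix n n K} {X : Matrix m n K} (h : M * X = X * N)
    (hMN : Disjoint (spectrum K M) (spectrum K N)) : X = 0 := by
  rcases isEmpty_or_nonempty n with hn | hn
  · exact Subsingleton.elim _ _
  -- `χ_N(M) X = X χ_N(N) = 0` by Cayley–Hamilton, and `χ_N(M)` is invertible by spectral mapping.
  have hdeg : 0 < N.charpoly.degree := by
    rw [charpoly_degree_eq_dim]
    exact_mod_cast Fintype.card_pos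
  have hunit : IsUnit (aeval M N.charpoly) := by
    rw [← spectrum.zero_notMem_iff K, spectrum.map_polynomial_aeval_of_degree_pos _ _ hdeg]
    rintro ⟨z, hzM, hz⟩
    exact hMN.ne_of_mem hzM (mem_spectrum_iff_isRoot_charpoly.2 hz) rfl
  have hX : aeval M N.charpoly * X = 0 := by
    rw [aeval_mul_eq_mul_aeval h, aeval_self_charpoly, Matrix.mul_zero]
  obtain ⟨U, hU⟩ := hunit
  calc X = (↑U⁻¹ * ↑U : Matrix m m K) * X := by rw [Units.inv_mul, Matrix.one_mul]
    _ = 0 := by rw [Matrix.mul_assoc, hU, hX, Matrix.mul_zero]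

theorem isUnit_det_of_forall_re_pos {A : Matrix n n ℂ} (h : ∀ z ∈ spectrum ℂ A, 0 < z.re) :
    IsUnit A.det :=
  (isUnit_iff_isUnit_det A).1 (spectrum.isUnit_of_zero_notMem ℂ fun h0 => by simpa using h 0 h0)

theorem mul_sqrt_eq_sqrt_mul {b : Matrix m n ℂ} {c : Matrix n m ℂ} {A : Matrix n n ℂ}
    {A' : Matrix m m ℂ} (hA : A * A = 1 + c * b) (hA' : A' * A' = 1 + b * c)
    (hAspec : ∀ z ∈ spectrum ℂ A, 0 < z.re) (hA'spec : ∀ z ∈ spectrum ℂ A', 0 < z.re) :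
    b * A = A' * b := by
  -- `A' * b - b * A` intertwines `A'` and `-A`, whose spectra lie in opposite half-planes.
  have hsylv : A' * (A' * b - b * A) = (A' * b - b * A) * -A := by
    simp only [Matrix.mul_sub, Matrix.sub_mul, Matrix.mul_neg, ← Matrix.mul_assoc, hA']
    simp only [Matrix.mul_assoc, hA, Matrix.add_mul, Matrix.mul_add, Matrix.one_mul,
      Matrix.mul_one]
    abel
  have hdisj : Disjoint (spectrum ℂ A') (spectrum ℂ (-A)) := by
    rw [← spectrum.neg_eq, Set.disjoint_left]
    intro z hz hz'
    have := hAspec _ (Set.mem_neg.1 hz')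
    rw [Complex.neg_re] at this
    linarith [hA'spec z hz]
  exact (sub_eq_zero.1 (eq_zero_of_mul_eq_mul_of_disjoint_spectrum hsylv hdisj)).symm

end Sylvester

section SqrtPair

variable {R : Type*} [CommRing R] {m n : Type*} [Fintype m] [Fintype n] [DecidableEq m]
  [DecidableEq n] {b : Matrix m n R} {c : Matrix n m R} {A : Matrix n n R} {A' : Matrix m m R}

theorem mul_nonsing_inv_eq_nonsing_inv_mul (hA : IsUnit A.det) (hA' : IsUnit A'.det)
    (hbA : b * A = A' * b) : b * A⁻¹ = A'⁻¹ * b := by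
  calc b * A⁻¹ = A'⁻¹ * (A' * b) * A⁻¹ := by rw [nonsing_inv_mul_cancel_left _ _ hA']
    _ = A'⁻¹ * b := by rw [← hbA, ← Matrix.mul_assoc, mul_nonsing_inv_cancel_right _ _ hA]

theorem inv_one_sub_mul_eq_mul_self (hA' : A' * A' = 1 + b * c) (hAu : IsUnit A.det)
    (hA'u : IsUnit A'.det) (hbA : b * A = A' * b) :
    (1 - -(b * A⁻¹) * -(c * A'⁻¹))⁻¹ = A' * A' := by
  have hbc : b * c = A' * A' - 1 := by rw [hA']; abel
  apply inv_eq_right_inv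
  rw [Matrix.neg_mul, Matrix.mul_neg, neg_neg, mul_nonsing_inv_eq_nonsing_inv_mul hAu hA'u hbA,
    Matrix.sub_mul, Matrix.one_mul, Matrix.mul_assoc, Matrix.mul_assoc, Matrix.mul_assoc,
    nonsing_inv_mul_cancel_left _ _ hA'u, ← Matrix.mul_assoc b c, hbc, Matrix.sub_mul,
    Matrix.one_mul, Matrix.mul_sub, Matrix.mul_assoc, nonsing_inv_mul_cancel_left _ _ hA'u,
    nonsing_inv_mul _ hA'u, sub_sub_cancel]

theorem trace_pullback_eq (hAu : IsUnit A.det) (hA'u : IsUnit A'.det) (hbA : b * A = A' * b)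
    (hcA : c * A' = A * c) {v₁ : Matrix m n R} {w₂ : Matrix n m R} {ρ : Matrix n n R}
    {σ τ : Matrix m m R} (hρ : v₁ * A + b * ρ = σ * b + A' * v₁) :
    (A' * A' * -((v₁ - b * A⁻¹ * ρ) * A⁻¹) * (A * A) * -((w₂ - c * A'⁻¹ * τ) * A'⁻¹)).trace =
      ((v₁ * A - σ * b) * (A * w₂ - c * τ)).trace := by
  have hX : A' * (v₁ - b * A⁻¹ * ρ) = v₁ * A - σ * b := by
    rw [Matrix.mul_sub, mul_nonsing_inv_eq_nonsing_inv_mul hAu hA'u hbA, ← Matrix.mul_assoc,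
      ← Matrix.mul_assoc, mul_nonsing_inv _ hA'u, Matrix.one_mul, sub_eq_sub_iff_add_eq_add,
      add_comm, ← hρ, add_comm]
  have hY : A * (w₂ - c * A'⁻¹ * τ) = A * w₂ - c * τ := by
    rw [Matrix.mul_sub, ← Matrix.mul_assoc, ← Matrix.mul_assoc, ← hcA, Matrix.mul_assoc c,
      mul_nonsing_inv _ hA'u, Matrix.mul_one]
  calc _ = (A' * ((A' * (v₁ - b * A⁻¹ * ρ)) * (A * (w₂ - c * A'⁻¹ * τ))) * A'⁻¹).trace := by
        simp only [Matrix.neg_mul, Matrix.mul_neg, neg_neg, Matrix.mul_assoc,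
          nonsing_inv_mul_cancel_left _ _ hAu]
    _ = _ := by
      rw [trace_mul_comm, ← Matrix.mul_assoc, nonsing_inv_mul _ hA'u, Matrix.one_mul, hX, hY]

theorem sqrt_pair_mul_eq (hA : A * A = 1 + c * b) (hA' : A' * A' = 1 + b * c)
    (hbA : b * A = A' * b) (hcA : c * A' = A * c) (v₁ : Matrix m n R) (w₂ : Matrix n m R)
    (σ τ : Matrix m m R) :
    (v₁ * A - σ * b) * (A * w₂ - c * τ) =
      v₁ * w₂ - σ * τ + (v₁ * c - σ * A') * (b * w₂ - A' * τ) := by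
  have hbc : b * c = A' * A' - 1 := by rw [hA']; abel
  simp only [Matrix.sub_mul, Matrix.mul_sub, Matrix.mul_assoc, ← Matrix.mul_assoc A A w₂, hA,
    ← Matrix.mul_assoc A c, ← hcA, ← Matrix.mul_assoc b A, hbA, ← Matrix.mul_assoc b c, hbc]
  simp only [Matrix.add_mul, Matrix.mul_add, Matrix.one_mul, Matrix.mul_assoc]
  abel

theorem trace_sqrt_pair_sub_swap (hA : A * A = 1 + c * b) (hA' : A' * A' = 1 + b * c)
    (hbA : b * A = A' * b) (hcA : c * A' = A * c) {v₁ w₁ : Matrix m n R} {v₂ w₂ : Matrix n m R}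
    {σ τ : Matrix m m R} (hσ : σ * A' + A' * σ = v₁ * c + b * v₂)
    (hτ : τ * A' + A' * τ = w₁ * c + b * w₂) :
    ((v₁ * A - σ * b) * (A * w₂ - c * τ)).trace - ((w₁ * A - τ * b) * (A * v₂ - c * σ)).trace =
      (v₁ * w₂).trace - (w₁ * v₂).trace := by
  have hσ' : b * v₂ - A' * σ = -(v₁ * c - σ * A') := by
    rw [neg_sub, sub_eq_sub_iff_add_eq_add, hσ, add_comm]
  have hτ' : b * w₂ - A' * τ = -(w₁ * c - τ * A') := by
    rw [neg_sub, sub_eq_sub_iff_add_eq_add, hτ, add_comm]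
  rw [sqrt_pair_mul_eq hA hA' hbA hcA, sqrt_pair_mul_eq hA hA' hbA hcA, hσ', hτ']
  simp only [trace_add, trace_sub, Matrix.mul_neg, trace_neg]
  rw [trace_mul_comm τ σ, trace_mul_comm (w₁ * c - τ * A')]
  abel

theorem trace_pullback_sub_swap (hA : A * A = 1 + c * b) (hA' : A' * A' = 1 + b * c)
    (hAu : IsUnit A.det) (hA'u : IsUnit A'.det) (hbA : b * A = A' * b) (hcA : c * A' = A * c)
    {v₁ w₁ : Matrix m n R} {v₂ w₂ : Matrix n m R} {ρ ρ' : Matrix n n R} {σ τ : Matrix m m R}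
    (hρ : v₁ * A + b * ρ = σ * b + A' * v₁) (hρ' : w₁ * A + b * ρ' = τ * b + A' * w₁)
    (hσ : σ * A' + A' * σ = v₁ * c + b * v₂) (hτ : τ * A' + A' * τ = w₁ * c + b * w₂) :
    (A' * A' * -((v₁ - b * A⁻¹ * ρ) * A⁻¹) * (A * A) * -((w₂ - c * A'⁻¹ * τ) * A'⁻¹)).trace -
      (A' * A' * -((w₁ - b * A⁻¹ * ρ') * A⁻¹) * (A * A) * -((v₂ - c * A'⁻¹ * σ) * A'⁻¹)).trace =
      (v₁ * w₂).trace - (w₁ * v₂).trace := by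
  rw [trace_pullback_eq hAu hA'u hbA hcA hρ, trace_pullback_eq hAu hA'u hbA hcA hρ']
  exact trace_sqrt_pair_sub_swap hA hA' hbA hcA hσ hτ

end SqrtPair

end Matrix

section Calculus

-- Matrices also carry the topology `instTopologicalSpaceMatrix`, definitionally but not
-- syntactically equal to that of `Matrix.normedAddCommGroup`; the lemmas below use only the latter.
attribute [-instance] instTopologicalSpaceMatrix Matrix.instUniformSpace

variable {𝕜 : Type*} [NontriviallyNormedField 𝕜] [CompleteSpace 𝕜]
  {E : Type*} [NormedAddCommGroup E] [NormedSpace 𝕜 E] {x : E}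
  {l m n : Type*} [Fintype l] [Fintype m] [Fintype n]

variable (𝕜 l m n) in
noncomputable def Matrix.mulL : Matrix l m 𝕜 →L[𝕜] Matrix m n 𝕜 →L[𝕜] Matrix l n 𝕜 :=
  (mulLinearMap 𝕜).toContinuousBilinearMap

@[simp] theorem Matrix.mulL_apply (A : Matrix l m 𝕜) (B : Matrix m n 𝕜) :
    mulL 𝕜 l m n A B = A * B := rfl

theorem DifferentiableAt.matrix_mul {f : E → Matrix l m 𝕜} {g : E → Matrix m n 𝕜}
    (hf : DifferentiableAt 𝕜 f x) (hg : DifferentiableAt 𝕜 g x) :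
    DifferentiableAt 𝕜 (fun y => f y * g y) x :=
  ((mulL 𝕜 l m n).hasFDerivAt_of_bilinear hf.hasFDerivAt hg.hasFDerivAt).differentiableAt

theorem fderiv_matrix_mul_apply {f : E → Matrix l m 𝕜} {g : E → Matrix m n 𝕜}
    (hf : DifferentiableAt 𝕜 f x) (hg : DifferentiableAt 𝕜 g x) (u : E) :
    fderiv 𝕜 (fun y => f y * g y) x u = fderiv 𝕜 f x u * g x + f x * fderiv 𝕜 g x u := by
  have h := (mulL 𝕜 l m n).fderiv_of_bilinear hf hg
  simp only [mulL_apply] at h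
  simp [h, add_comm]

theorem fderiv_matrix_mul_eq_of_eventuallyEq {f₁ : E → Matrix l m 𝕜} {g₁ : E → Matrix m n 𝕜}
    {k : Type*} [Fintype k] {f₂ : E → Matrix l k 𝕜} {g₂ : E → Matrix k n 𝕜} (C : Matrix l n 𝕜)
    (h : ∀ᶠ y in nhds x, f₁ y * g₁ y = C + f₂ y * g₂ y)
    (hf₁ : DifferentiableAt 𝕜 f₁ x) (hg₁ : DifferentiableAt 𝕜 g₁ x)
    (hf₂ : DifferentiableAt 𝕜 f₂ x) (hg₂ : DifferentiableAt 𝕜 g₂ x) (u : E) :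
    fderiv 𝕜 f₁ x u * g₁ x + f₁ x * fderiv 𝕜 g₁ x u =
      fderiv 𝕜 f₂ x u * g₂ x + f₂ x * fderiv 𝕜 g₂ x u := by
  rw [← fderiv_matrix_mul_apply hf₁ hg₁, ← fderiv_matrix_mul_apply hf₂ hg₂,
    EventuallyEq.fderiv_eq h, fderiv_const_add]

-- Under the `linftyOp` norm, which induces the same topology, square matrices form a complete
-- normed algebra in which the inverse is `Ring.inverse`.
theorem DifferentiableAt.matrix_inv [DecidableEq n] {f : E → Matrix n n 𝕜}
    (hf : DifferentiableAt 𝕜 f x) (hx : IsUnit (f x).det) :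
    DifferentiableAt 𝕜 (fun y => (f y)⁻¹) x := by
  let _ := Matrix.linftyOpNormedRing (n := n) (α := 𝕜)
  let _ := Matrix.linftyOpNormedAlgebra (n := n) (α := 𝕜) (R := 𝕜)
  have : CompleteSpace (Matrix n n 𝕜) := FiniteDimensional.complete 𝕜 _
  simp only [Matrix.nonsing_inv_eq_ringInverse]
  exact hf.inverse ((isUnit_iff_isUnit_det _).2 hx)

theorem fderiv_matrix_inv_apply [DecidableEq n] {f : E → Matrix n n 𝕜}
    (hf : DifferentiableAt 𝕜 f x) (hx : IsUnit (f x).det) (u : E) :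
    fderiv 𝕜 (fun y => (f y)⁻¹) x u = -((f x)⁻¹ * fderiv 𝕜 f x u * (f x)⁻¹) := by
  let _ := Matrix.linftyOpNormedRing (n := n) (α := 𝕜)
  let _ := Matrix.linftyOpNormedAlgebra (n := n) (α := 𝕜) (R := 𝕜)
  have : CompleteSpace (Matrix n n 𝕜) := FiniteDimensional.complete 𝕜 _
  obtain ⟨U, hU⟩ := (isUnit_iff_isUnit_det _).2 hx
  have hinv : HasFDerivAt Ring.inverse
      (-ContinuousLinearMap.mulLeftRight 𝕜 _ ↑U⁻¹ ↑U⁻¹) (f x) := hU ▸ hasFDerivAt_ringInverse U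
  have h : HasFDerivAt (fun y => Ring.inverse (f y)) _ x := hinv.comp x hf.hasFDerivAt
  simp only [Matrix.nonsing_inv_eq_ringInverse]
  rw [h.fderiv, ← hU, Ring.inverse_unit]
  simp [Matrix.mul_assoc]

theorem fderiv_matrix_mul_inv_apply [DecidableEq n] {f : E → Matrix m n 𝕜}
    {g : E → Matrix n n 𝕜} (hf : DifferentiableAt 𝕜 f x) (hg : DifferentiableAt 𝕜 g x)
    (hx : IsUnit (g x).det) (u : E) :
    fderiv 𝕜 (fun y => f y * (g y)⁻¹) x u =
      (fderiv 𝕜 f x u - f x * (g x)⁻¹ * fderiv 𝕜 g x u) * (g x)⁻¹ := by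
  rw [fderiv_matrix_mul_apply hf (hg.matrix_inv hx), fderiv_matrix_inv_apply hg hx]
  simp only [Matrix.mul_neg, Matrix.sub_mul, Matrix.mul_assoc]
  abel

end Calculus

theorem fderiv_prodMk_neg_mul_inv_apply {m n : Type*} [Fintype m] [DecidableEq m] [Fintype n]
    [DecidableEq n] {S : Matrix m n ℂ × Matrix n m ℂ → Matrix n n ℂ}
    {S' : Matrix m n ℂ × Matrix n m ℂ → Matrix m m ℂ} {x : Matrix m n ℂ × Matrix n m ℂ}
    (hSd : DifferentiableAt ℂ S x) (hS'd : DifferentiableAt ℂ S' x) (hA : IsUnit (S x).det)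
    (hA' : IsUnit (S' x).det) (u : Matrix m n ℂ × Matrix n m ℂ) :
    fderiv ℂ (fun y => (-(y.1 * (S y)⁻¹), -(y.2 * (S' y)⁻¹))) x u =
      (-((u.1 - x.1 * (S x)⁻¹ * fderiv ℂ S x u) * (S x)⁻¹),
        -((u.2 - x.2 * (S' x)⁻¹ * fderiv ℂ S' x u) * (S' x)⁻¹)) := by
  refine (congrArg (· u) (DifferentiableAt.fderiv_prodMk
    (differentiableAt_fst.matrix_mul (hSd.matrix_inv hA)).fun_neg
    (differentiableAt_snd.matrix_mul (hS'd.matrix_inv hA')).fun_neg)).trans ?_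
  simp only [ContinuousLinearMap.prod_apply, fderiv_fun_neg, _root_.neg_apply,
    fderiv_matrix_mul_inv_apply differentiableAt_fst hSd hA,
    fderiv_matrix_mul_inv_apply differentiableAt_snd hS'd hA', fderiv_fst, fderiv_snd,
    ContinuousLinearMap.coe_fst', ContinuousLinearMap.coe_snd']
  rfl -- the two sides differ only in the topology instances on matrices

theorem pullback_two_form_flat_general {p q : ℕ}
    (x : Matrix (Fin p) (Fin q) ℂ × Matrix (Fin q) (Fin p) ℂ)
    (S : Matrix (Fin p) (Fin q) ℂ × Matrix (Fin q) (Fin p) ℂ → Matrix (Fin q) (Fin q) ℂ)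
    (S' : Matrix (Fin p) (Fin q) ℂ × Matrix (Fin q) (Fin p) ℂ → Matrix (Fin p) (Fin p) ℂ)
    (hS : ∀ᶠ y in nhds x, S y * S y = 1 + y.2 * y.1 ∧ ∀ z ∈ spectrum ℂ (S y), 0 < z.re)
    (hS' : ∀ᶠ y in nhds x, S' y * S' y = 1 + y.1 * y.2 ∧ ∀ z ∈ spectrum ℂ (S' y), 0 < z.re)
    (hSd : DifferentiableAt ℂ S x) (hS'd : DifferentiableAt ℂ S' x)
    (v w : Matrix (Fin p) (Fin q) ℂ × Matrix (Fin q) (Fin p) ℂ) :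
    let R : Matrix (Fin p) (Fin q) ℂ × Matrix (Fin q) (Fin p) ℂ →
        Matrix (Fin p) (Fin q) ℂ × Matrix (Fin q) (Fin p) ℂ :=
      fun y => (-(y.1 * (S y)⁻¹), -(y.2 * (S' y)⁻¹))
    ((1 - (R x).1 * (R x).2)⁻¹ * (fderiv ℂ R x v).1 *
          (1 - (R x).2 * (R x).1)⁻¹ * (fderiv ℂ R x w).2).trace -
      ((1 - (R x).1 * (R x).2)⁻¹ * (fderiv ℂ R x w).1 *
          (1 - (R x).2 * (R x).1)⁻¹ * (fderiv ℂ R x v).2).trace =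
    (v.1 * w.2).trace - (w.1 * v.2).trace := by
  intro R
  obtain ⟨hA, hAspec⟩ := hS.self_of_nhds
  obtain ⟨hA', hA'spec⟩ := hS'.self_of_nhds
  have hAu := isUnit_det_of_forall_re_pos hAspec
  have hA'u := isUnit_det_of_forall_re_pos hA'spec
  have hbA := mul_sqrt_eq_sqrt_mul hA hA' hAspec hA'spec
  have hcA := mul_sqrt_eq_sqrt_mul hA' hA hA'spec hAspec
  have hcomm : ∀ᶠ y in nhds x, y.1 * S y = 0 + S' y * y.1 := by
    filter_upwards [hS, hS'] with y hy hy'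
    rw [zero_add]
    exact mul_sqrt_eq_sqrt_mul hy.1 hy'.1 hy.2 hy'.2
  have hρ := fderiv_matrix_mul_eq_of_eventuallyEq 0 hcomm
    differentiableAt_fst hSd hS'd differentiableAt_fst
  have hσ := fderiv_matrix_mul_eq_of_eventuallyEq 1 (hS'.mono fun y hy => hy.1)
    hS'd hS'd differentiableAt_fst differentiableAt_snd
  simp only [fderiv_fst, fderiv_snd, ContinuousLinearMap.coe_fst',
    ContinuousLinearMap.coe_snd'] at hρ hσ
  simp only [R, fderiv_prodMk_neg_mul_inv_apply hSd hS'd hAu hA'u,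
    inv_one_sub_mul_eq_mul_self hA' hAu hA'u hbA, inv_one_sub_mul_eq_mul_self hA hA'u hAu hcA]
  exact trace_pullback_sub_swap hA hA' hAu hA'u hbA hcA (hρ v) (hρ w) (hσ v) (hσ w)

/-- Flatness of the invariant two-form in normal coordinates: under the
substitution `Z = -b(1+b̃b)^{-1/2}`, `Z̃ = -b̃(1+b b̃)^{-1/2}` (with the principal
square roots encoded as differentiable matrix functions `S`, `S'` squaring to
`1 + b̃b` resp. `1 + b b̃` with spectra in the open right half-plane, on a
neighborhood of the point), the pullback of
`Tr((1-Z Z̃)⁻¹ dZ ∧ (1-Z̃Z)⁻¹ dZ̃)` equals the flat form `Tr(db ∧ db̃)`,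
stated pointwise on a pair of tangent vectors `(v, w)`. -/
theorem pullback_two_form_flat {p q : ℕ}
    (x : Matrix (Fin p) (Fin q) ℂ × Matrix (Fin q) (Fin p) ℂ)
    (hspec : ∀ z ∈ spectrum ℂ (x.2 * x.1), ¬(z.im = 0 ∧ z.re ≤ -1))
    (S : Matrix (Fin p) (Fin q) ℂ × Matrix (Fin q) (Fin p) ℂ → Matrix (Fin q) (Fin q) ℂ)
    (S' : Matrix (Fin p) (Fin q) ℂ × Matrix (Fin q) (Fin p) ℂ → Matrix (Fin p) (Fin p) ℂ)
    (hS : ∀ᶠ y in nhds x, S y * S y = 1 + y.2 * y.1 ∧ ∀ z ∈ spectrum ℂ (S y), 0 < z.re)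
    (hS' : ∀ᶠ y in nhds x, S' y * S' y = 1 + y.1 * y.2 ∧ ∀ z ∈ spectrum ℂ (S' y), 0 < z.re)
    (hSd : DifferentiableAt ℂ S x) (hS'd : DifferentiableAt ℂ S' x)
    (v w : Matrix (Fin p) (Fin q) ℂ × Matrix (Fin q) (Fin p) ℂ) :
    let R : Matrix (Fin p) (Fin q) ℂ × Matrix (Fin q) (Fin p) ℂ →
        Matrix (Fin p) (Fin q) ℂ × Matrix (Fin q) (Fin p) ℂ :=
      fun y => (-(y.1 * (S y)⁻¹), -(y.2 * (S' y)⁻¹))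
    ((1 - (R x).1 * (R x).2)⁻¹ * (fderiv ℂ R x v).1 *
          (1 - (R x).2 * (R x).1)⁻¹ * (fderiv ℂ R x w).2).trace -
      ((1 - (R x).1 * (R x).2)⁻¹ * (fderiv ℂ R x w).1 *
          (1 - (R x).2 * (R x).1)⁻¹ * (fderiv ℂ R x v).2).trace =
    (v.1 * w.2).trace - (w.1 * v.2).trace :=
  pullback_two_form_flat_general x S S' hS hS' hSd hS'd v w
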